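/- Let Λ, Q, e, λ₀, g_λ, w(λ), f_λ, R_λ be as in the self-tuning network setting: g_λ convex differentiable with L_λ-Lipschitz gradient, λ₀(λ) > 0, w(λ) the unique minimizer of f_λ(w) = g_λ(w) + (λ₀(λ)/2)‖w‖². Suppose U* minimizes F(U) = E_{λ∼Q}[f_λ(U e(λ))] over ℝ^{k×q}, and U_t satisfies F(U_t) ≤ F(U*) + ε for ε ≥ 0. Let U_app be any matrix and Δ_app(λ) = U_app e(λ) − w(λ). Then E_{λ∼Q}[λ₀(λ)‖U_t e(λ) − w(λ)‖²] ≤ E_{λ∼Q}[(L_λ + λ₀(λ))‖Δ_app(λ)‖²] + 2ε. -/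

import Mathlib

open MeasureTheory

open scoped RealInnerProductSpace

/-!
For `f = g + c/2 ‖·‖²` minimised at `w`, stationarity gives `∇g w = -c w`, hence
`f x - f w = R(x) + c/2 ‖x - w‖²` with `R` the Bregman remainder of `g` at `w`. Convexity gives
`R ≥ 0` and the `L`-Lipschitz gradient gives `R ≤ L/2 ‖x - w‖²`. Integrate the lower bound at
`U_t e(λ)` and the upper bound at `U_app e(λ)`, and chain them through
`F(U_t) ≤ F(U*) + ε ≤ F(U_app) + ε`.
-/

noncomputable def mulVecE {k q : ℕ} (U : Matrix (Fin k) (Fin q) ℝ)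
    (x : EuclideanSpace ℝ (Fin q)) : EuclideanSpace ℝ (Fin k) :=
  WithLp.toLp 2 (fun i => ∑ j, U i j * x j)

section

variable {E : Type*} [NormedAddCommGroup E] [InnerProductSpace ℝ E] {g : E → ℝ}

/-- The remainder `R(Δ) = g (x + Δ) - g x - ⟪∇g x, Δ⟫` of the paper, with `y = x + Δ`. -/
def bregmanRemainder (g : E → ℝ) (d x y : E) : ℝ :=
  g y - g x - ⟪d, y - x⟫

theorem add_half_norm_sq_sub_eq_bregmanRemainder {c : ℝ} {d w : E} (hd : d = -(c • w)) (x : E) :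
    (g x + c / 2 * ‖x‖ ^ 2) - (g w + c / 2 * ‖w‖ ^ 2) =
      bregmanRemainder g d w x + c / 2 * ‖x - w‖ ^ 2 := by
  have hsq : ‖x‖ ^ 2 = ‖w‖ ^ 2 + 2 * ⟪w, x - w⟫ + ‖x - w‖ ^ 2 := by
    simpa using norm_add_sq_real w (x - w)
  simp only [bregmanRemainder, hd, inner_neg_left, real_inner_smul_left, hsq]
  ring

variable [CompleteSpace E]

theorem HasGradientAt.hasDerivAt_comp_add_smul {x v d : E} {t : ℝ}
    (h : HasGradientAt g d (x + t • v)) :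
    HasDerivAt (fun s : ℝ => g (x + s • v)) ⟪d, v⟫ t := by
  have hline : HasDerivAt (fun s : ℝ => x + s • v) v t := by
    simpa using ((hasDerivAt_id t).smul_const v).const_add x
  simpa [InnerProductSpace.toDual_apply_apply, Function.comp_def] using
    (hasGradientAt_iff_hasFDerivAt.1 h).comp_hasDerivAt t hline

theorem bregmanRemainder_nonneg (hconv : ConvexOn ℝ Set.univ g) {d x : E}
    (hd : HasGradientAt g d x) (y : E) : 0 ≤ bregmanRemainder g d x y := by
  have hline : (fun s : ℝ => g (x + s • (y - x))) = g ∘ AffineMap.lineMap (k := ℝ) x y := by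
    ext s
    simp [AffineMap.lineMap_apply, add_comm]
  have hderiv : HasDerivAt (g ∘ AffineMap.lineMap (k := ℝ) x y) ⟪d, y - x⟫ 0 :=
    hline ▸ HasGradientAt.hasDerivAt_comp_add_smul (t := 0) (by simpa using hd)
  have hslope := (hconv.comp_affineMap (AffineMap.lineMap x y)).le_slope_of_hasDerivAt
    (Set.mem_univ 0) (Set.mem_univ 1) zero_lt_one hderiv
  simp only [slope_def_field, Function.comp_apply, AffineMap.lineMap_apply_one,
    AffineMap.lineMap_apply_zero, sub_zero, div_one] at hslope
  unfold bregmanRemainder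
  linarith

theorem bregmanRemainder_le {g' : E → E} {L : ℝ} (hgrad : ∀ x, HasGradientAt g (g' x) x)
    (hlip : ∀ x y, ‖g' x - g' y‖ ≤ L * ‖x - y‖) (x y : E) :
    bregmanRemainder g (g' x) x y ≤ L / 2 * ‖y - x‖ ^ 2 := by
  set v := y - x
  set φ : ℝ → ℝ := fun t => g (x + t • v) - t * ⟪g' x, v⟫ - L / 2 * t ^ 2 * ‖v‖ ^ 2
  have hφ : ∀ t, HasDerivAt φ (⟪g' (x + t • v) - g' x, v⟫ - L * t * ‖v‖ ^ 2) t := by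
    intro t
    refine ((((hgrad (x + t • v)).hasDerivAt_comp_add_smul).sub
      ((hasDerivAt_id t).mul_const ⟪g' x, v⟫)).sub
      (((hasDerivAt_pow 2 t).const_mul (L / 2)).mul_const (‖v‖ ^ 2))).congr_deriv ?_
    simp only [inner_sub_left, Nat.cast_ofNat]
    ring
  have hφ' : ∀ t, 0 ≤ t → ⟪g' (x + t • v) - g' x, v⟫ - L * t * ‖v‖ ^ 2 ≤ 0 := by
    intro t ht
    have : ⟪g' (x + t • v) - g' x, v⟫ ≤ L * t * ‖v‖ ^ 2 := calc
      _ ≤ ‖g' (x + t • v) - g' x‖ * ‖v‖ := real_inner_le_norm _ _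
      _ ≤ L * ‖t • v‖ * ‖v‖ := by
        gcongr
        simpa using hlip (x + t • v) x
      _ = L * t * ‖v‖ ^ 2 := by rw [norm_smul, Real.norm_of_nonneg ht]; ring
    linarith
  have hanti : AntitoneOn φ (Set.Ici 0) :=
    antitoneOn_of_hasDerivWithinAt_nonpos (convex_Ici 0)
      (fun t _ => (hφ t).continuousAt.continuousWithinAt)
      (fun t _ => (hφ t).hasDerivWithinAt)
      (fun t ht => hφ' t (le_of_lt (by simpa using ht)))
  have hφ10 : φ 1 ≤ φ 0 := hanti Set.self_mem_Ici (by norm_num) zero_le_one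
  simp only [φ, v, one_smul, zero_smul, add_zero, add_sub_cancel] at hφ10
  unfold bregmanRemainder
  linarith

theorem HasGradientAt.eq_neg_smul_of_isMinOn {c : ℝ} {d w : E} (hd : HasGradientAt g d w)
    (hw : IsMinOn (fun x => g x + c / 2 * ‖x‖ ^ 2) Set.univ w) :
    d = -(c • w) := by
  set v := d + c • w
  have hderiv : HasDerivAt (fun s : ℝ => g (w + s • v) + c / 2 * ‖w + s • v‖ ^ 2) ⟪v, v⟫ 0 := by
    have hline : HasDerivAt (fun s : ℝ => w + s • v) v 0 := by
      simpa using ((hasDerivAt_id (0 : ℝ)).smul_const v).const_add w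
    refine ((HasGradientAt.hasDerivAt_comp_add_smul (t := 0) (by simpa using hd)).add
      (hline.norm_sq.const_mul (c / 2))).congr_deriv ?_
    simp only [zero_smul, add_zero, v, inner_add_left, real_inner_smul_left]
    ring
  have hmin : IsLocalMin (fun s : ℝ => g (w + s • v) + c / 2 * ‖w + s • v‖ ^ 2) 0 :=
    Filter.Eventually.of_forall fun s => by simpa using hw (Set.mem_univ (w + s • v))
  rw [eq_neg_iff_add_eq_zero]
  exact inner_self_eq_zero.1 (hmin.hasDerivAt_eq_zero hderiv)

theorem half_sq_dist_le_of_isMinOn {c : ℝ} {w : E}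
    (hw : IsMinOn (fun x => g x + c / 2 * ‖x‖ ^ 2) Set.univ w)
    (hconv : ConvexOn ℝ Set.univ g) {d : E} (hd : HasGradientAt g d w) (x : E) :
    c / 2 * ‖x - w‖ ^ 2 ≤ (g x + c / 2 * ‖x‖ ^ 2) - (g w + c / 2 * ‖w‖ ^ 2) := by
  rw [add_half_norm_sq_sub_eq_bregmanRemainder (hd.eq_neg_smul_of_isMinOn hw)]
  linarith [bregmanRemainder_nonneg hconv hd x]

theorem sub_le_half_sq_dist_of_isMinOn {c : ℝ} {w : E}
    (hw : IsMinOn (fun x => g x + c / 2 * ‖x‖ ^ 2) Set.univ w) {g' : E → E} {L : ℝ}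
    (hgrad : ∀ x, HasGradientAt g (g' x) x) (hlip : ∀ x y, ‖g' x - g' y‖ ≤ L * ‖x - y‖)
    (x : E) : (g x + c / 2 * ‖x‖ ^ 2) - (g w + c / 2 * ‖w‖ ^ 2) ≤ (L + c) / 2 * ‖x - w‖ ^ 2 := by
  rw [add_half_norm_sq_sub_eq_bregmanRemainder ((hgrad w).eq_neg_smul_of_isMinOn hw)]
  linarith [bregmanRemainder_le hgrad hlip w x]

end

theorem hyper_batch_approx_guarantee_general {k q : ℕ} {Λ : Type*} [MeasurableSpace Λ]
    (Q : Measure Λ)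
    (g : Λ → EuclideanSpace ℝ (Fin k) → ℝ)
    (g' : Λ → EuclideanSpace ℝ (Fin k) → EuclideanSpace ℝ (Fin k))
    (L lam0 : Λ → ℝ) (w : Λ → EuclideanSpace ℝ (Fin k))
    (e : Λ → EuclideanSpace ℝ (Fin q))
    (Ustar Ut Uapp : Matrix (Fin k) (Fin q) ℝ) (ε : ℝ)
    (hconv : ∀ l, ConvexOn ℝ Set.univ (g l))
    (hgrad : ∀ l x, HasGradientAt (g l) (g' l x) x)
    (hlip : ∀ l x y, ‖g' l x - g' l y‖ ≤ L l * ‖x - y‖)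
    (hw : ∀ l, IsMinOn (fun x => g l x + lam0 l / 2 * ‖x‖ ^ 2) Set.univ (w l))
    (hintt : Integrable (fun l => g l (mulVecE Ut (e l)) + lam0 l / 2 * ‖mulVecE Ut (e l)‖ ^ 2) Q)
    (hintapp : Integrable
      (fun l => g l (mulVecE Uapp (e l)) + lam0 l / 2 * ‖mulVecE Uapp (e l)‖ ^ 2) Q)
    (hintw : Integrable (fun l => g l (w l) + lam0 l / 2 * ‖w l‖ ^ 2) Q)
    (hintq : Integrable (fun l => lam0 l * ‖mulVecE Ut (e l) - w l‖ ^ 2) Q)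
    (hintq' : Integrable (fun l => (L l + lam0 l) * ‖mulVecE Uapp (e l) - w l‖ ^ 2) Q)
    (hstar : ∀ U : Matrix (Fin k) (Fin q) ℝ,
      (∫ l, (g l (mulVecE Ustar (e l)) + lam0 l / 2 * ‖mulVecE Ustar (e l)‖ ^ 2) ∂Q) ≤
        ∫ l, (g l (mulVecE U (e l)) + lam0 l / 2 * ‖mulVecE U (e l)‖ ^ 2) ∂Q)
    (ht : (∫ l, (g l (mulVecE Ut (e l)) + lam0 l / 2 * ‖mulVecE Ut (e l)‖ ^ 2) ∂Q) ≤
        (∫ l, (g l (mulVecE Ustar (e l)) + lam0 l / 2 * ‖mulVecE Ustar (e l)‖ ^ 2) ∂Q) + ε) :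
    (∫ l, lam0 l * ‖mulVecE Ut (e l) - w l‖ ^ 2 ∂Q) ≤
      (∫ l, (L l + lam0 l) * ‖mulVecE Uapp (e l) - w l‖ ^ 2 ∂Q) + 2 * ε := by
  have lower := integral_mono hintq ((hintt.sub hintw).const_mul 2) fun l => by
    simp only [Pi.sub_apply]
    linarith [half_sq_dist_le_of_isMinOn (hw l) (hconv l) (hgrad l (w l)) (mulVecE Ut (e l))]
  have upper := integral_mono ((hintapp.sub hintw).const_mul 2) hintq' fun l => by
    simp only [Pi.sub_apply]
    linarith [sub_le_half_sq_dist_of_isMinOn (hw l) (hgrad l) (hlip l) (mulVecE Uapp (e l))]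
  simp only [Pi.sub_apply, integral_const_mul, integral_sub hintt hintw,
    integral_sub hintapp hintw] at lower upper
  linarith [hstar Uapp]

/-- Proposition F.4 (deterministic version): if `U_t` is an `ε`-minimizer of the expected
self-tuning objective `F`, then the expected weighted squared distance of `U_t e(λ)` to the
per-λ optima `w(λ)` is bounded via any comparison matrix `U_app`. -/
theorem hyper_batch_approx_guarantee {k q : ℕ} {Λ : Type*} [MeasurableSpace Λ]
    (Q : Measure Λ) [IsProbabilityMeasure Q]
    (g : Λ → EuclideanSpace ℝ (Fin k) → ℝ)
    (g' : Λ → EuclideanSpace ℝ (Fin k) → EuclideanSpace ℝ (Fin k))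
    (L lam0 : Λ → ℝ) (w : Λ → EuclideanSpace ℝ (Fin k))
    (e : Λ → EuclideanSpace ℝ (Fin q))
    (Ustar Ut Uapp : Matrix (Fin k) (Fin q) ℝ) (ε : ℝ) (hε : 0 ≤ ε)
    (hconv : ∀ l, ConvexOn ℝ Set.univ (g l))
    (hgrad : ∀ l x, HasGradientAt (g l) (g' l x) x)
    (hlip : ∀ l x y, ‖g' l x - g' l y‖ ≤ L l * ‖x - y‖)
    (hlam : ∀ l, 0 < lam0 l)
    (hw : ∀ l, IsMinOn (fun x => g l x + lam0 l / 2 * ‖x‖ ^ 2) Set.univ (w l))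
    (hintt : Integrable (fun l => g l (mulVecE Ut (e l)) + lam0 l / 2 * ‖mulVecE Ut (e l)‖ ^ 2) Q)
    (hintstar : Integrable
      (fun l => g l (mulVecE Ustar (e l)) + lam0 l / 2 * ‖mulVecE Ustar (e l)‖ ^ 2) Q)
    (hintapp : Integrable
      (fun l => g l (mulVecE Uapp (e l)) + lam0 l / 2 * ‖mulVecE Uapp (e l)‖ ^ 2) Q)
    (hintw : Integrable (fun l => g l (w l) + lam0 l / 2 * ‖w l‖ ^ 2) Q)
    (hintq : Integrable (fun l => lam0 l * ‖mulVecE Ut (e l) - w l‖ ^ 2) Q)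
    (hintq' : Integrable (fun l => (L l + lam0 l) * ‖mulVecE Uapp (e l) - w l‖ ^ 2) Q)
    (hstar : ∀ U : Matrix (Fin k) (Fin q) ℝ,
      (∫ l, (g l (mulVecE Ustar (e l)) + lam0 l / 2 * ‖mulVecE Ustar (e l)‖ ^ 2) ∂Q) ≤
        ∫ l, (g l (mulVecE U (e l)) + lam0 l / 2 * ‖mulVecE U (e l)‖ ^ 2) ∂Q)
    (ht : (∫ l, (g l (mulVecE Ut (e l)) + lam0 l / 2 * ‖mulVecE Ut (e l)‖ ^ 2) ∂Q) ≤
        (∫ l, (g l (mulVecE Ustar (e l)) + lam0 l / 2 * ‖mulVecE Ustar (e l)‖ ^ 2) ∂Q) + ε) :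
    (∫ l, lam0 l * ‖mulVecE Ut (e l) - w l‖ ^ 2 ∂Q) ≤
      (∫ l, (L l + lam0 l) * ‖mulVecE Uapp (e l) - w l‖ ^ 2 ∂Q) + 2 * ε :=
  hyper_batch_approx_guarantee_general Q g g' L lam0 w e Ustar Ut Uapp ε hconv hgrad hlip hw hintt
    hintapp hintw hintq hintq' hstar ht
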